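/- arXiv:1605.03401 — 2 statements merged into one kernel-verified Lean document; each statement's English description precedes it below -/
import Mathlib

section
/- Let α ∈ (0,1), θ > -α, and let (Y_j)_{j≥1} be independent with Y_j ∼ Beta(1-α, θ + jα). Set M_n = ∏_{i=1}^n (1 - Y_i). Then for every γ > -(θ+α), E[M_n^γ] = [Γ(θ+γ+nα)/Γ(θ+nα)] · [Γ(n+θ/α)/Γ(n+(θ+γ)/α)] · [Γ(θ+1)Γ((θ+γ)/α+1)] / [Γ(θ+γ+1)Γ(θ/α+1)]. -/
/-!
Almost surely every `Y j` lies in `(0,1)`, so `M_n ^ γ = ∏ (1 - Y j) ^ γ`, and by independence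
its expectation is the product of the moments `E[(1 - Y j) ^ γ]`. Multiplying the `Beta(a,b)`
density by `(1 - x) ^ γ` gives `B(a, b+γ) / B(a, b)` times the `Beta(a, b+γ)` density, so
`E[(1 - Y) ^ γ] = Γ(a+b) Γ(b+γ) / (Γ(b) Γ(a+b+γ))`. For `a = 1 - α`, `b = θ + jα` consecutive
factors telescope through `Γ(x+1) = x Γ(x)`, the leftover ratios `(θ+jα) / (θ+γ+jα)` being
`(j + θ/α) / (j + (θ+γ)/α)`.
-/

open MeasureTheory ProbabilityTheory Filter Topology

/-- The Beta(a,b) distribution on `ℝ`, supported on `(0,1)`, with density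
`Γ(a+b)/(Γ(a)Γ(b)) x^{a-1}(1-x)^{b-1}`. -/
noncomputable def betaMeasure (a b : ℝ) : Measure ℝ :=
  (MeasureTheory.volume.restrict (Set.Ioo (0:ℝ) 1)).withDensity fun x =>
    ENNReal.ofReal (Real.Gamma (a + b) / (Real.Gamma a * Real.Gamma b) *
      x ^ (a - 1) * (1 - x) ^ (b - 1))

/-- `(Y j)_{j ≥ 1}` are independent with `Y j ∼ Beta(1-α, θ+jα)` (the stick-breaking
variables of the `PD(α,θ)` distribution). -/
def IsStickBreaking {Ω : Type*} [MeasureSpace Ω] (α θ : ℝ) (Y : ℕ → Ω → ℝ) : Prop :=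
  (∀ j, Measurable (Y j)) ∧
    iIndepFun Y ℙ ∧
      ∀ j : ℕ, 1 ≤ j → Measure.map (Y j) ℙ = _root_.betaMeasure (1 - α) (θ + j * α)

/-- `M n = ∏_{i=1}^n (1 - Y i)` (so `M 0 = 1`). -/
noncomputable def Mstick {Ω : Type*} (Y : ℕ → Ω → ℝ) (n : ℕ) (ω : Ω) : ℝ :=
  ∏ i ∈ Finset.Icc 1 n, (1 - Y i ω)

namespace ProbabilityTheory

lemma betaPDFReal_nonneg {a b : ℝ} (ha : 0 < a) (hb : 0 < b) (x : ℝ) : 0 ≤ betaPDFReal a b x := by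
  rw [betaPDFReal]
  split_ifs with hx
  · exact (betaPDFReal_pos hx.1 hx.2 ha hb).le.trans_eq (if_pos hx)
  · rfl

lemma integral_betaPDFReal {a b : ℝ} (ha : 0 < a) (hb : 0 < b) :
    ∫ x, betaPDFReal a b x = 1 := by
  rw [integral_eq_lintegral_of_nonneg_ae (.of_forall (betaPDFReal_nonneg ha hb))
    (measurable_betaPDFReal a b).aestronglyMeasurable]
  exact congrArg ENNReal.toReal (lintegral_betaPDF_eq_one ha hb)

lemma betaPDFReal_mul_one_sub_rpow {a b γ : ℝ} (ha : 0 < a) (hbγ : 0 < b + γ) (x : ℝ) :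
    betaPDFReal a b x * (1 - x) ^ γ = beta a (b + γ) / beta a b * betaPDFReal a (b + γ) x := by
  simp only [betaPDFReal]
  split_ifs with hx
  · have hB := (beta_pos ha hbγ).ne'
    rw [add_sub_right_comm, Real.rpow_add (sub_pos.2 hx.2)]
    field_simp
  · simp

lemma integral_one_sub_rpow_betaMeasure {a b γ : ℝ} (ha : 0 < a) (hb : 0 < b) (hbγ : 0 < b + γ) :
    ∫ x, (1 - x) ^ γ ∂betaMeasure a b = beta a (b + γ) / beta a b := by
  have hpdf : Measurable (betaPDF a b) := (measurable_betaPDFReal a b).ennreal_ofReal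
  rw [betaMeasure, integral_withDensity_eq_integral_toReal_smul hpdf
    (.of_forall fun _ => ENNReal.ofReal_lt_top)]
  simp_rw [betaPDF, ENNReal.toReal_ofReal (betaPDFReal_nonneg ha hb _), smul_eq_mul,
    betaPDFReal_mul_one_sub_rpow ha hbγ, integral_const_mul, integral_betaPDFReal ha hbγ, mul_one]

end ProbabilityTheory

lemma betaMeasure_eq_probabilityTheory_betaMeasure (a b : ℝ) :
    _root_.betaMeasure a b = ProbabilityTheory.betaMeasure a b := by
  rw [_root_.betaMeasure, ← withDensity_indicator measurableSet_Ioo, ProbabilityTheory.betaMeasure]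
  congr 1
  funext x
  simp only [Set.indicator, Set.mem_Ioo, betaPDF, betaPDFReal, beta, one_div_div]
  split_ifs <;> simp

lemma ae_mem_Ioo_betaMeasure (a b : ℝ) : ∀ᵐ x ∂_root_.betaMeasure a b, x ∈ Set.Ioo (0:ℝ) 1 :=
  (withDensity_absolutelyContinuous _ _).ae_le (ae_restrict_mem measurableSet_Ioo)

open Real in
lemma integral_one_sub_rpow_betaMeasure_eq_Gamma {a b γ : ℝ} (ha : 0 < a) (hb : 0 < b)
    (hbγ : 0 < b + γ) :
    ∫ x, (1 - x) ^ γ ∂_root_.betaMeasure a b =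
      Gamma (a + b) * Gamma (b + γ) / (Gamma b * Gamma (a + b + γ)) := by
  rw [betaMeasure_eq_probabilityTheory_betaMeasure,
    ProbabilityTheory.integral_one_sub_rpow_betaMeasure ha hb hbγ, ProbabilityTheory.beta,
    ProbabilityTheory.beta, ← add_assoc]
  have := (Gamma_pos_of_pos ha).ne'
  have := (Gamma_pos_of_pos hb).ne'
  have := (Gamma_pos_of_pos (add_pos ha hb)).ne'
  have := (Gamma_pos_of_pos (by linarith : 0 < a + b + γ)).ne'
  field_simp

lemma ProbabilityTheory.iIndepFun.integral_finset_prod_comp {Ω ι 𝓧 : Type*} {mΩ : MeasurableSpace Ω}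
    {μ : Measure Ω} [MeasurableSpace 𝓧] {X : ι → Ω → 𝓧} (hX : iIndepFun X μ)
    (mX : ∀ i, Measurable (X i)) {f : 𝓧 → ℝ} (hf : Measurable f) (s : Finset ι) :
    ∫ ω, ∏ i ∈ s, f (X i ω) ∂μ = ∏ i ∈ s, ∫ ω, f (X i ω) ∂μ := by
  have hs (g : ι → ℝ) : ∏ i ∈ s, g i = ∏ i : s, g i := (Finset.prod_coe_sort s g).symm
  simp_rw [hs]
  exact (hX.precomp Subtype.val_injective).integral_fun_prod_comp
    (fun i => (mX i).aemeasurable) (fun _ => hf.aestronglyMeasurable)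

open Real in
lemma prod_Icc_Gamma_ratio_eq {α θ γ : ℝ} (hα₀ : 0 < α) (hα₁ : α ≤ 1) (hθ : 0 < θ + α)
    (hγ : 0 < θ + γ + α) {n : ℕ} (hn : 1 ≤ n) :
    ∏ j ∈ Finset.Icc 1 n, Gamma (1 - α + (θ + j * α)) * Gamma (θ + j * α + γ) /
        (Gamma (θ + j * α) * Gamma (1 - α + (θ + j * α) + γ)) =
      (Gamma (θ + γ + n * α) / Gamma (θ + n * α)) *
        (Gamma (n + θ / α) / Gamma (n + (θ + γ) / α)) *
        (Gamma (θ + 1) * Gamma ((θ + γ) / α + 1) /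
          (Gamma (θ + γ + 1) * Gamma (θ / α + 1))) := by
  have hθ' : 0 < θ / α + 1 := by rw [div_add_one hα₀.ne']; positivity
  have hγ' : 0 < (θ + γ) / α + 1 := by rw [div_add_one hα₀.ne']; positivity
  have := (Gamma_pos_of_pos hθ').ne'
  have := (Gamma_pos_of_pos hγ').ne'
  have := (Gamma_pos_of_pos (by linarith : 0 < θ + γ + 1)).ne'
  have := (Gamma_pos_of_pos (by linarith : 0 < θ + 1)).ne'
  induction n, hn using Nat.le_induction with
  | base =>
    have := (Gamma_pos_of_pos hθ).ne'
    simp only [Finset.Icc_self, Finset.prod_singleton, Nat.cast_one, one_mul]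
    rw [show 1 - α + (θ + α) = θ + 1 by ring, add_comm (1 : ℝ) (θ / α),
      add_comm (1 : ℝ) ((θ + γ) / α), add_right_comm θ α γ, add_right_comm θ 1 γ]
    field_simp
  | succ n hn ih =>
    have hn' : (1 : ℝ) ≤ n := by exact_mod_cast hn
    have hx : 0 < θ + n * α := by nlinarith
    have hy : 0 < θ + γ + n * α := by nlinarith
    have hp : 0 < n + θ / α := by linarith
    have hq : 0 < n + (θ + γ) / α := by linarith
    have hpq : (n + θ / α) * (θ + γ + n * α) = (n + (θ + γ) / α) * (θ + n * α) := by
      field_simp; ring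
    rw [Finset.prod_Icc_succ_top (by omega), ih]
    push_cast
    rw [show 1 - α + (θ + (n + 1) * α) = θ + n * α + 1 by ring,
      show θ + n * α + 1 + γ = θ + γ + n * α + 1 by ring,
      show θ + (n + 1) * α + γ = θ + γ + (n + 1) * α by ring,
      add_right_comm (n : ℝ) 1, add_right_comm (n : ℝ) 1,
      Gamma_add_one hx.ne', Gamma_add_one hy.ne', Gamma_add_one hp.ne', Gamma_add_one hq.ne']
    have := (Gamma_pos_of_pos hx).ne'
    have := (Gamma_pos_of_pos hy).ne'
    have := (Gamma_pos_of_pos hp).ne'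
    have := (Gamma_pos_of_pos hq).ne'
    have := (Gamma_pos_of_pos (by nlinarith : 0 < θ + (n + 1) * α)).ne'
    -- once `Γ(x+1) = x Γ(x)` is applied, only `x / y = p / q` remains
    generalize Gamma (θ + (n + 1) * α) = I at *
    generalize Gamma (θ + γ + (n + 1) * α) = J at *
    generalize n + θ / α = p at *
    generalize n + (θ + γ) / α = q at *
    generalize θ + n * α = x at *
    generalize θ + γ + n * α = y at *
    field_simp
    linear_combination (-J) * hpq

theorem stmt2_general {Ω : Type*} [MeasureSpace Ω]
    (α θ : ℝ) (hα : α ∈ Set.Ioo (0:ℝ) 1) (hθ : -α < θ)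
    (Y : ℕ → Ω → ℝ) (hY : IsStickBreaking α θ Y)
    (γ : ℝ) (hγ : -(θ + α) < γ) (n : ℕ) (hn : 1 ≤ n) :
    ∫ ω, Mstick Y n ω ^ γ ∂ℙ =
      (Real.Gamma (θ + γ + n * α) / Real.Gamma (θ + n * α)) *
        (Real.Gamma (n + θ / α) / Real.Gamma (n + (θ + γ) / α)) *
        (Real.Gamma (θ + 1) * Real.Gamma ((θ + γ) / α + 1) /
          (Real.Gamma (θ + γ + 1) * Real.Gamma (θ / α + 1))) := by
  obtain ⟨hmeas, hindep, hdist⟩ := hY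
  obtain ⟨hα₀, hα₁⟩ := hα
  have hY_mem {j : ℕ} (hj : 1 ≤ j) : ∀ᵐ ω, Y j ω ∈ Set.Ioo (0 : ℝ) 1 :=
    ae_of_ae_map (hmeas j).aemeasurable <| by
      rw [hdist j hj]; exact ae_mem_Ioo_betaMeasure _ _
  have hM : (fun ω => Mstick Y n ω ^ γ) =ᵐ[ℙ] fun ω => ∏ j ∈ Finset.Icc 1 n, (1 - Y j ω) ^ γ := by
    filter_upwards [(Finset.eventually_all _).2 fun j hj => hY_mem (Finset.mem_Icc.1 hj).1]
      with ω hω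
    exact (Real.finsetProd_rpow _ _ (fun j hj => sub_nonneg.2 (hω j hj).2.le) γ).symm
  have hφ : Measurable fun x : ℝ => (1 - x) ^ γ := by fun_prop
  have hmoment {j : ℕ} (hj : 1 ≤ j) : ∫ ω, (1 - Y j ω) ^ γ =
      Real.Gamma (1 - α + (θ + j * α)) * Real.Gamma (θ + j * α + γ) /
        (Real.Gamma (θ + j * α) * Real.Gamma (1 - α + (θ + j * α) + γ)) := by
    have hj' : (1 : ℝ) ≤ j := by exact_mod_cast hj
    rw [← integral_map (hmeas j).aemeasurable hφ.aestronglyMeasurable, hdist j hj]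
    exact integral_one_sub_rpow_betaMeasure_eq_Gamma (by linarith) (by nlinarith) (by nlinarith)
  rw [integral_congr_ae hM, hindep.integral_finset_prod_comp hmeas hφ,
    Finset.prod_congr rfl fun j hj => hmoment (Finset.mem_Icc.1 hj).1]
  exact prod_Icc_Gamma_ratio_eq hα₀ hα₁.le (by linarith) (by linarith) hn

/-- exact formula for `E[M_n^γ]`. -/
theorem stmt2 {Ω : Type*} [MeasureSpace Ω] [IsProbabilityMeasure (ℙ : Measure Ω)]
    (α θ : ℝ) (hα : α ∈ Set.Ioo (0:ℝ) 1) (hθ : -α < θ)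
    (Y : ℕ → Ω → ℝ) (hY : IsStickBreaking α θ Y)
    (γ : ℝ) (hγ : -(θ + α) < γ) (n : ℕ) (hn : 1 ≤ n) :
    ∫ ω, Mstick Y n ω ^ γ ∂ℙ =
      (Real.Gamma (θ + γ + n * α) / Real.Gamma (θ + n * α)) *
        (Real.Gamma (n + θ / α) / Real.Gamma (n + (θ + γ) / α)) *
        (Real.Gamma (θ + 1) * Real.Gamma ((θ + γ) / α + 1) /
          (Real.Gamma (θ + γ + 1) * Real.Gamma (θ / α + 1))) :=
  stmt2_general α θ hα hθ Y hY γ hγ n hn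
end

section
/- Let α ∈ (0,1), θ > -α, (Y_j) independent with Y_j ∼ Beta(1-α, θ+jα), and S_n = Σ_{j=1}^n Y_j^α j^{α-1}. Then there exists a random variable S_∞ such that S_n - Ψ_α log n → S_∞ almost surely as n → ∞, where Ψ_α = α^{-α} Γ(1-α)^{-1}. -/
open MeasureTheory ProbabilityTheory Filter Topology

/-- `S n = Σ_{j=1}^n Y_j^α j^{α-1}`. -/
noncomputable def Ssum {Ω : Type*} (α : ℝ) (Y : ℕ → Ω → ℝ) (n : ℕ) (ω : Ω) : ℝ :=
  ∑ j ∈ Finset.Icc 1 n, Y j ω ^ α * (j : ℝ) ^ (α - 1)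

/-!
Write `Z_j = Y_j ^ α * j ^ (α - 1) ∈ [0, 1]` and `x_j = 1 - α + θ + j α`, so that
`E[Y_j ^ s] = Γ(1 - α + s) Γ(x_j) / (Γ(1 - α) Γ(x_j + s))`. Log-convexity of `Γ` gives Wendel's
inequality `x ^ (-s) ≤ Γ(x) / Γ(x + s) ≤ (1 + s / x) x ^ (-s)` for `0 ≤ s ≤ 1`, whence
`E Z_j = Ψ_α / j + O(1 / j²)` and `Var Z_j = O(1 / j²)`. The first estimate and
`H_n - log n → γ` make `∑_{j ≤ n} E Z_j - Ψ_α log n` converge. For the centred sums, Chebyshev's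
inequality on the blocks `(k⁶, (k + 1)⁶]` (variance `O(k⁻⁶)`, deviation `k⁻²`) and Borel–Cantelli
give a.s. convergence along `n = k⁶`. Finally `S_n` is nondecreasing and
`log (k + 1)⁶ - log k⁶ → 0`, so convergence along `k⁶` extends to all `n`.
-/

open scoped ENNReal

namespace Real

theorem Gamma_add_le_rpow_mul_rpow {x s : ℝ} (hx : 0 < x) (hs₀ : 0 ≤ s) (hs₁ : s ≤ 1) :
    Gamma (x + s) ≤ Gamma x ^ (1 - s) * Gamma (x + 1) ^ s := by
  have hx₁ : 0 < x + 1 := by linarith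
  have h := convexOn_log_Gamma.2 (Set.mem_Ioi.2 hx) (Set.mem_Ioi.2 hx₁)
    (sub_nonneg.2 hs₁) hs₀ (sub_add_cancel 1 s)
  simp only [Function.comp, smul_eq_mul, show (1 - s) * x + s * (x + 1) = x + s by ring] at h
  rwa [← exp_le_exp, exp_log (Gamma_pos_of_pos (by linarith)), exp_add, mul_comm (1 - s),
    mul_comm s, ← rpow_def_of_pos (Gamma_pos_of_pos hx),
    ← rpow_def_of_pos (Gamma_pos_of_pos hx₁)] at h

theorem Gamma_add_le_Gamma_mul_rpow {x s : ℝ} (hx : 0 < x) (hs₀ : 0 ≤ s) (hs₁ : s ≤ 1) :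
    Gamma (x + s) ≤ Gamma x * x ^ s := by
  have hΓ := Gamma_pos_of_pos hx
  calc Gamma (x + s) ≤ Gamma x ^ (1 - s) * Gamma (x + 1) ^ s :=
        Gamma_add_le_rpow_mul_rpow hx hs₀ hs₁
    _ = Gamma x * x ^ s := by
        rw [Gamma_add_one hx.ne', mul_rpow hx.le hΓ.le, ← mul_assoc, mul_comm _ (x ^ s),
          mul_assoc, ← rpow_add hΓ, sub_add_cancel, rpow_one, mul_comm]

theorem Gamma_mul_le_Gamma_add_mul_rpow {x s : ℝ} (hx : 0 < x) (hs₀ : 0 ≤ s) (hs₁ : s ≤ 1) :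
    Gamma x * x ≤ Gamma (x + s) * (x + s) ^ (1 - s) := by
  have hxs : 0 < x + s := by linarith
  have h := Gamma_add_le_Gamma_mul_rpow hxs (sub_nonneg.2 hs₁) (by linarith : 1 - s ≤ 1)
  rwa [add_assoc, add_sub_cancel, Gamma_add_one hx.ne', mul_comm] at h

theorem rpow_neg_le_Gamma_div_Gamma_add {x s : ℝ} (hx : 0 < x) (hs₀ : 0 ≤ s) (hs₁ : s ≤ 1) :
    x ^ (-s) ≤ Gamma x / Gamma (x + s) := by
  rw [le_div_iff₀ (Gamma_pos_of_pos (by linarith)), rpow_neg hx.le,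
    inv_mul_le_iff₀ (rpow_pos_of_pos hx s), mul_comm]
  exact Gamma_add_le_Gamma_mul_rpow hx hs₀ hs₁

theorem Gamma_div_Gamma_add_le {x s : ℝ} (hx : 0 < x) (hs₀ : 0 ≤ s) (hs₁ : s ≤ 1) :
    Gamma x / Gamma (x + s) ≤ (1 + s / x) * x ^ (-s) := by
  have hxs : 0 < x + s := by linarith
  have hpow : (x + s) ^ (1 - s) ≤ (x + s) * x ^ (-s) := by
    rw [sub_eq_add_neg, rpow_add hxs, rpow_one]
    exact mul_le_mul_of_nonneg_left (rpow_le_rpow_of_nonpos hx (by linarith) (by linarith))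
      hxs.le
  rw [div_le_iff₀ (Gamma_pos_of_pos hxs)]
  calc Gamma x = Gamma x * x / x := by field_simp
    _ ≤ Gamma (x + s) * (x + s) ^ (1 - s) / x :=
        div_le_div_of_nonneg_right (Gamma_mul_le_Gamma_add_mul_rpow hx hs₀ hs₁) hx.le
    _ ≤ Gamma (x + s) * ((x + s) * x ^ (-s)) / x := by
        gcongr
    _ = (1 + s / x) * x ^ (-s) * Gamma (x + s) := by field_simp

theorem Gamma_div_Gamma_add_le_of_le {x y s : ℝ} (hy : 0 < y) (hyx : y ≤ x) (hs₀ : 0 ≤ s)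
    (hs₁ : s ≤ 1) : Gamma x / Gamma (x + s) ≤ (1 + s / y) * y ^ (-s) := by
  have hx : 0 < x := hy.trans_le hyx
  exact (Gamma_div_Gamma_add_le hx hs₀ hs₁).trans
    (mul_le_mul (by gcongr) (rpow_le_rpow_of_nonpos hy hyx (neg_nonpos.2 hs₀))
      (rpow_nonneg hx.le _) (by positivity))

theorem abs_rpow_neg_sub_rpow_neg_le {a b m s : ℝ} (hm : 0 < m) (ha : m ≤ a) (hb : m ≤ b)
    (hs₀ : 0 ≤ s) (hs₁ : s ≤ 1) : |a ^ (-s) - b ^ (-s)| ≤ m ^ (-s) / m * |a - b| := by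
  wlog hba : b ≤ a generalizing a b
  · rw [abs_sub_comm, abs_sub_comm a]
    exact this hb ha (le_of_not_ge hba)
  have ha₀ : 0 < a := hm.trans_le ha
  have hb₀ : 0 < b := hm.trans_le hb
  have hq : b / a ≤ 1 := (div_le_one ha₀).2 hba
  have hq_le : b / a ≤ (b / a) ^ s := by
    simpa using rpow_le_rpow_of_exponent_ge (div_pos hb₀ ha₀) hq hs₁
  have hfactor : b ^ (-s) - a ^ (-s) = b ^ (-s) * (1 - (b / a) ^ s) := by
    rw [div_rpow hb₀.le ha₀.le, rpow_neg hb₀.le, rpow_neg ha₀.le]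
    field_simp
  rw [abs_of_nonpos (by linarith [rpow_le_rpow_of_nonpos hb₀ hba (neg_nonpos.2 hs₀)]),
    neg_sub, hfactor, abs_of_nonneg (sub_nonneg.2 hba)]
  have hdiff : 1 - (b / a) ^ s ≤ (a - b) / m :=
    calc 1 - (b / a) ^ s ≤ 1 - b / a := by linarith
      _ = (a - b) / a := by field_simp
      _ ≤ (a - b) / m := by gcongr
  calc b ^ (-s) * (1 - (b / a) ^ s) ≤ m ^ (-s) * ((a - b) / m) :=
        mul_le_mul (rpow_le_rpow_of_nonpos hm hb (neg_nonpos.2 hs₀)) hdiff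
          (sub_nonneg.2 (rpow_le_one (div_pos hb₀ ha₀).le hq hs₀)) (by positivity)
    _ = m ^ (-s) / m * (a - b) := by ring

theorem abs_Gamma_div_Gamma_add_sub_rpow_neg_le {x y z s : ℝ} (hy : 0 < y) (hyx : y ≤ x)
    (hyz : y ≤ z) (hs₀ : 0 ≤ s) (hs₁ : s ≤ 1) :
    |Gamma x / Gamma (x + s) - z ^ (-s)| ≤ (s + |x - z|) * (y ^ (-s) / y) := by
  have hx : 0 < x := hy.trans_le hyx
  have hGamma : |Gamma x / Gamma (x + s) - x ^ (-s)| ≤ s * (y ^ (-s) / y) := by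
    rw [abs_of_nonneg (sub_nonneg.2 (rpow_neg_le_Gamma_div_Gamma_add hx hs₀ hs₁))]
    calc Gamma x / Gamma (x + s) - x ^ (-s) ≤ s / x * x ^ (-s) := by
          linarith [Gamma_div_Gamma_add_le hx hs₀ hs₁]
      _ ≤ s / y * y ^ (-s) :=
          mul_le_mul (by gcongr) (rpow_le_rpow_of_nonpos hy hyx (neg_nonpos.2 hs₀))
            (rpow_nonneg hx.le _) (by positivity)
      _ = s * (y ^ (-s) / y) := by ring
  calc |Gamma x / Gamma (x + s) - z ^ (-s)|
      ≤ |Gamma x / Gamma (x + s) - x ^ (-s)| + |x ^ (-s) - z ^ (-s)| := abs_sub_le _ _ _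
    _ ≤ s * (y ^ (-s) / y) + y ^ (-s) / y * |x - z| :=
        add_le_add hGamma (abs_rpow_neg_sub_rpow_neg_le hy hyx hyz hs₀ hs₁)
    _ = (s + |x - z|) * (y ^ (-s) / y) := by ring

theorem Gamma_div_Gamma_add_add_le_of_le {x y s : ℝ} (hy : 0 < y) (hyx : y ≤ x) (hs₀ : 0 ≤ s)
    (hs₁ : s ≤ 1) : Gamma x / Gamma (x + s + s) ≤ ((1 + s / y) * y ^ (-s)) ^ 2 := by
  have hx : 0 < x := hy.trans_le hyx
  rw [← div_mul_div_cancel₀ (Gamma_pos_of_pos (by linarith : 0 < x + s)).ne', sq]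
  exact mul_le_mul (Gamma_div_Gamma_add_le_of_le hy hyx hs₀ hs₁)
    (Gamma_div_Gamma_add_le_of_le hy (by linarith) hs₀ hs₁)
    (div_nonneg (Gamma_pos_of_pos (by linarith)).le (Gamma_pos_of_pos (by linarith)).le)
    (by positivity)

theorem rpow_sub_one_mul_mul_rpow_neg {a j s : ℝ} (ha : 0 ≤ a) (hj : 0 < j) :
    j ^ (s - 1) * (a * j) ^ (-s) = a ^ (-s) / j := by
  rw [mul_rpow ha hj.le, mul_left_comm, ← rpow_add hj, show s - 1 + -s = -1 by ring,
    rpow_neg_one, div_eq_mul_inv]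

end Real

theorem integral_Ioo_rpow_mul_one_sub_rpow {a b : ℝ} (ha : 0 < a) (hb : 0 < b) :
    ∫ x in Set.Ioo (0 : ℝ) 1, x ^ (a - 1) * (1 - x) ^ (b - 1)
      = Real.Gamma a * Real.Gamma b / Real.Gamma (a + b) := by
  have h := Complex.Gamma_mul_Gamma_eq_betaIntegral (s := (a : ℂ)) (t := (b : ℂ))
    (by simpa using ha) (by simpa using hb)
  have hcast : Complex.betaIntegral a b
      = ((∫ x in Set.Ioo (0 : ℝ) 1, x ^ (a - 1) * (1 - x) ^ (b - 1) : ℝ) : ℂ) := by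
    rw [Complex.betaIntegral, intervalIntegral.integral_of_le zero_le_one,
      integral_Ioc_eq_integral_Ioo]
    refine (setIntegral_congr_fun measurableSet_Ioo fun t ⟨ht₀, ht₁⟩ => ?_).trans integral_ofReal
    change _ = ((t ^ (a - 1) * (1 - t) ^ (b - 1) : ℝ) : ℂ)
    rw [Complex.ofReal_mul, Complex.ofReal_cpow ht₀.le, Complex.ofReal_cpow (by linarith)]
    push_cast
    rfl
  rw [hcast, Complex.Gamma_ofReal, Complex.Gamma_ofReal, ← Complex.ofReal_add,
    Complex.Gamma_ofReal] at h
  norm_cast at h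
  rw [h, mul_div_cancel_left₀ _ (Real.Gamma_pos_of_pos (add_pos ha hb)).ne']

theorem integral_rpow_betaMeasure {a b s : ℝ} (ha : 0 < a) (hb : 0 < b) (hs : 0 ≤ s) :
    ∫ x, x ^ s ∂(_root_.betaMeasure a b)
      = Real.Gamma (a + s) * Real.Gamma (a + b) / (Real.Gamma a * Real.Gamma (a + b + s)) := by
  rw [_root_.betaMeasure, integral_withDensity_eq_integral_toReal_smul (by fun_prop)
    (ae_of_all _ fun _ => ENNReal.ofReal_lt_top)]
  have hsub : a + s + b = a + b + s := by ring
  calc ∫ x in Set.Ioo 0 1, (ENNReal.ofReal (Real.Gamma (a + b) / (Real.Gamma a * Real.Gamma b)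
        * x ^ (a - 1) * (1 - x) ^ (b - 1))).toReal • x ^ s
      = ∫ x in Set.Ioo 0 1, Real.Gamma (a + b) / (Real.Gamma a * Real.Gamma b)
          * (x ^ (a + s - 1) * (1 - x) ^ (b - 1)) := by
        refine setIntegral_congr_fun measurableSet_Ioo fun x ⟨hx₀, hx₁⟩ => ?_
        rw [ENNReal.toReal_ofReal (by positivity), smul_eq_mul,
          show a + s - 1 = a - 1 + s by ring, Real.rpow_add hx₀]
        ring
    _ = Real.Gamma (a + s) * Real.Gamma (a + b) / (Real.Gamma a * Real.Gamma (a + b + s)) := by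
        rw [integral_const_mul, integral_Ioo_rpow_mul_one_sub_rpow (by linarith) hb, hsub]
        field_simp

theorem betaMeasure_compl_Ioo (a b : ℝ) : _root_.betaMeasure a b (Set.Ioo 0 1)ᶜ = 0 := by
  rw [_root_.betaMeasure, withDensity_apply _ measurableSet_Ioo.compl,
    Measure.restrict_restrict measurableSet_Ioo.compl, Set.compl_inter_self,
    Measure.restrict_empty, lintegral_zero_measure]

section BetaLaw

variable {Ω : Type*} {mΩ : MeasurableSpace Ω} {μ : Measure Ω} {X : Ω → ℝ} {a b : ℝ}

theorem ae_mem_Ioo_of_map_eq_betaMeasure (hX : Measurable X)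
    (hlaw : μ.map X = _root_.betaMeasure a b) : ∀ᵐ ω ∂μ, X ω ∈ Set.Ioo 0 1 := by
  rw [ae_iff]
  change μ (X ⁻¹' (Set.Ioo 0 1)ᶜ) = 0
  rw [← Measure.map_apply hX measurableSet_Ioo.compl, hlaw, betaMeasure_compl_Ioo]

theorem integral_rpow_of_map_eq_betaMeasure (hX : Measurable X)
    (hlaw : μ.map X = _root_.betaMeasure a b) (ha : 0 < a) (hb : 0 < b) {s : ℝ} (hs : 0 ≤ s) :
    ∫ ω, X ω ^ s ∂μ
      = Real.Gamma (a + s) * Real.Gamma (a + b) / (Real.Gamma a * Real.Gamma (a + b + s)) := by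
  rw [← integral_rpow_betaMeasure ha hb hs, ← hlaw,
    integral_map hX.aemeasurable (by fun_prop : Measurable fun x : ℝ => x ^ s).aestronglyMeasurable]

end BetaLaw

theorem sum_Icc_one_eq_sum_range_sub {M : Type*} [AddCommGroup M] (f : ℕ → M) (n : ℕ) :
    ∑ j ∈ Finset.Icc 1 n, f j = ∑ j ∈ Finset.range (n + 1), f j - f 0 := by
  rw [Finset.range_eq_Ico, Finset.sum_eq_sum_Ico_succ_bot (Nat.zero_lt_succ n), zero_add,
    Nat.succ_eq_add_one, Finset.Ico_add_one_right_eq_Icc,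
    add_sub_cancel_left]

theorem exists_tendsto_sum_Icc_sub_mul_log {a : ℕ → ℝ} {c D : ℝ}
    (ha : ∀ j, 1 ≤ j → |a j - c / j| ≤ D / j ^ 2) :
    ∃ L, Tendsto (fun n : ℕ => ∑ j ∈ Finset.Icc 1 n, a j - c * Real.log n) atTop (𝓝 L) := by
  set f : ℕ → ℝ := fun j => a j - c / j
  have hf : Summable f := by
    refine Summable.of_norm_bounded_eventually_nat
      ((Real.summable_nat_pow_inv.2 one_lt_two).mul_left D) ?_
    filter_upwards [eventually_ge_atTop 1] with j hj
    simpa [f, div_eq_mul_inv] using ha j hj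
  have hsum : Tendsto (fun n => ∑ j ∈ Finset.Icc 1 n, f j) atTop (𝓝 (∑' j, f j - f 0)) := by
    simp_rw [sum_Icc_one_eq_sum_range_sub]
    exact ((hf.hasSum.tendsto_sum_nat).comp (tendsto_add_atTop_nat 1)).sub_const _
  refine ⟨_, (hsum.add (Real.tendsto_harmonic_sub_log.const_mul c)).congr fun n => ?_⟩
  simp only [f, Finset.sum_sub_distrib, harmonic_eq_sum_Icc, div_eq_mul_inv, ← Finset.mul_sum]
  push_cast
  ring

theorem tendsto_sub_of_tendsto_comp_of_monotone {s g : ℕ → ℝ} {N : ℕ → ℕ} {L : ℝ}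
    (hs : Monotone s) (hg : Monotone g) (hN : StrictMono N) (hN₀ : N 0 = 0)
    (hgN : Tendsto (fun k => g (N (k + 1)) - g (N k)) atTop (𝓝 0))
    (hL : Tendsto (fun k => s (N k) - g (N k)) atTop (𝓝 L)) :
    Tendsto (fun n => s n - g n) atTop (𝓝 L) := by
  classical
  -- `k n` is the index with `N (k n) ≤ n < N (k n + 1)`
  set k : ℕ → ℕ := fun n => Nat.findGreatest (fun i => N i ≤ n) n
  have hk_le : ∀ n, N (k n) ≤ n := fun n =>
    Nat.findGreatest_spec (P := fun i => N i ≤ n) (Nat.zero_le n) (by simp [hN₀])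
  have hlt_k : ∀ n, n < N (k n + 1) := by
    intro n
    by_contra! h
    have hle : k n + 1 ≤ n := (hN.le_apply).trans h
    exact Nat.findGreatest_is_greatest (Nat.lt_succ_self _) hle h
  have hk : Tendsto k atTop atTop := tendsto_atTop_atTop.2 fun i =>
    ⟨N i, fun n hn => Nat.le_findGreatest (hN.le_apply.trans hn) hn⟩
  have hlow : Tendsto (fun n => (s (N (k n)) - g (N (k n)))
      - (g (N (k n + 1)) - g (N (k n)))) atTop (𝓝 (L - 0)) :=
    (hL.comp hk).sub (hgN.comp hk)
  have hupp : Tendsto (fun n => (s (N (k n + 1)) - g (N (k n + 1)))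
      + (g (N (k n + 1)) - g (N (k n)))) atTop (𝓝 (L + 0)) :=
    ((hL.comp (tendsto_add_atTop_nat 1)).comp hk).add (hgN.comp hk)
  rw [sub_zero] at hlow
  rw [add_zero] at hupp
  refine tendsto_of_tendsto_of_tendsto_of_le_of_le hlow hupp (fun n => ?_) (fun n => ?_)
  · have := hs (hk_le n); have := hg (hlt_k n).le
    simp only; linarith
  · have := hs (hlt_k n).le; have := hg (hk_le n)
    simp only; linarith

section IndependentSums

variable {Ω : Type*} {mΩ : MeasurableSpace Ω} {μ : Measure Ω} {Z : ℕ → Ω → ℝ} {C : ℝ}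

theorem variance_sum_Ioc_le (hindep : iIndepFun Z μ) (hL2 : ∀ j, 1 ≤ j → MemLp (Z j) 2 μ)
    (hvar : ∀ j, 1 ≤ j → variance (Z j) μ ≤ C / j ^ 2) {m n : ℕ} (hm : 1 ≤ m) (hmn : m ≤ n) :
    variance (∑ j ∈ Finset.Ioc m n, Z j) μ ≤ C / m := by
  have hC : 0 ≤ C := by simpa using (variance_nonneg (Z 1) μ).trans (hvar 1 le_rfl)
  have hpos : ∀ j ∈ Finset.Ioc m n, 1 ≤ j := fun j hj => hm.trans (Finset.mem_Ioc.1 hj).1.le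
  rw [IndepFun.variance_sum (fun j hj => hL2 j (hpos j hj))
    (fun i _ j _ hij => hindep.indepFun hij)]
  calc ∑ j ∈ Finset.Ioc m n, variance (Z j) μ
      ≤ ∑ j ∈ Finset.Ioc m n, C * ((j : ℝ) ^ 2)⁻¹ :=
        Finset.sum_le_sum fun j hj => (hvar j (hpos j hj)).trans_eq (div_eq_mul_inv _ _)
    _ = C * ∑ j ∈ Finset.Ioc m n, ((j : ℝ) ^ 2)⁻¹ := by rw [Finset.mul_sum]
    _ ≤ C * (m : ℝ)⁻¹ := by
        gcongr
        exact (sum_Ioc_inv_sq_le_sub (by omega) hmn).trans (sub_le_self _ (by positivity))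
    _ = C / m := (div_eq_mul_inv _ _).symm

variable [IsProbabilityMeasure μ]

theorem ae_eventually_abs_sum_Ioc_pow_six_sub_integral_lt (hindep : iIndepFun Z μ)
    (hL2 : ∀ j, 1 ≤ j → MemLp (Z j) 2 μ) (hvar : ∀ j, 1 ≤ j → variance (Z j) μ ≤ C / j ^ 2) :
    ∀ᵐ ω ∂μ, ∀ᶠ k : ℕ in atTop,
      |∑ j ∈ Finset.Ioc (k ^ 6) ((k + 1) ^ 6), (Z j ω - ∫ x, Z j x ∂μ)| < ((k : ℝ) ^ 2)⁻¹ := by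
  set U : ℕ → Ω → ℝ := fun k => ∑ j ∈ Finset.Ioc (k ^ 6) ((k + 1) ^ 6), Z j
  have hpos : ∀ k, ∀ j ∈ Finset.Ioc (k ^ 6) ((k + 1) ^ 6), 1 ≤ j := fun k j hj => by
    have := (Finset.mem_Ioc.1 hj).1; omega
  have hUL2 : ∀ k, MemLp (U k) 2 μ := fun k =>
    memLp_finsetSum' _ fun j hj => hL2 j (hpos k j hj)
  have hU : ∀ k ω, ∑ j ∈ Finset.Ioc (k ^ 6) ((k + 1) ^ 6), (Z j ω - ∫ x, Z j x ∂μ)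
      = U k ω - ∫ x, U k x ∂μ := fun k ω => by
    simp only [U, Finset.sum_apply]
    rw [integral_finsetSum _ fun j hj => (hL2 j (hpos k j hj)).integrable one_le_two,
      Finset.sum_sub_distrib]
  have hcheb : ∀ k : ℕ, μ {ω | (((k + 1 : ℕ) : ℝ) ^ 2)⁻¹ ≤ |U (k + 1) ω - ∫ x, U (k + 1) x ∂μ|}
      ≤ ENNReal.ofReal (C * (((k + 1 : ℕ) : ℝ) ^ 2)⁻¹) := fun k => by
    refine (meas_ge_le_variance_div_sq (hUL2 (k + 1)) (by positivity)).trans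
      (ENNReal.ofReal_le_ofReal ?_)
    have hvarU := variance_sum_Ioc_le hindep hL2 hvar (m := (k + 1) ^ 6) (n := (k + 2) ^ 6)
      (Nat.one_le_pow _ _ k.succ_pos) (Nat.pow_le_pow_left (by omega) 6)
    push_cast at hvarU ⊢
    calc variance (U (k + 1)) μ / ((((k : ℝ) + 1) ^ 2)⁻¹) ^ 2
        = variance (U (k + 1)) μ * ((k : ℝ) + 1) ^ 4 := by field_simp
      _ ≤ C / ((k : ℝ) + 1) ^ 6 * ((k : ℝ) + 1) ^ 4 := by gcongr
      _ = C * (((k : ℝ) + 1) ^ 2)⁻¹ := by field_simp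
  have hsum : Summable fun k : ℕ => C * (((k + 1 : ℕ) : ℝ) ^ 2)⁻¹ :=
    ((summable_nat_add_iff 1).2 (Real.summable_nat_pow_inv.2 one_lt_two)).mul_left C
  have hC : 0 ≤ C := by simpa using (variance_nonneg (Z 1) μ).trans (hvar 1 le_rfl)
  have hBC := ae_eventually_notMem (ne_top_of_le_ne_top
    (by rw [← ENNReal.ofReal_tsum_of_nonneg (fun k => by positivity) hsum]
        exact ENNReal.ofReal_ne_top) (ENNReal.tsum_le_tsum hcheb))
  filter_upwards [hBC] with ω hω
  rw [← map_add_atTop_eq_nat 1, eventually_map]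
  filter_upwards [hω] with k hk
  simpa [hU, not_le] using hk

theorem ae_exists_tendsto_sum_Icc_pow_six_sub_integral (hindep : iIndepFun Z μ)
    (hL2 : ∀ j, 1 ≤ j → MemLp (Z j) 2 μ) (hvar : ∀ j, 1 ≤ j → variance (Z j) μ ≤ C / j ^ 2) :
    ∀ᵐ ω ∂μ, ∃ L, Tendsto
      (fun k : ℕ => ∑ j ∈ Finset.Icc 1 (k ^ 6), (Z j ω - ∫ x, Z j x ∂μ)) atTop (𝓝 L) := by
  filter_upwards [ae_eventually_abs_sum_Ioc_pow_six_sub_integral_lt hindep hL2 hvar] with ω hω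
  set f : ℕ → ℝ := fun j => Z j ω - ∫ x, Z j x ∂μ
  have hdist : ∀ k : ℕ, dist (∑ j ∈ Finset.Icc 1 (k ^ 6), f j)
      (∑ j ∈ Finset.Icc 1 ((k + 1) ^ 6), f j)
        = |∑ j ∈ Finset.Ioc (k ^ 6) ((k + 1) ^ 6), f j| := fun k => by
    have hIcc : ∀ n, Finset.Icc 1 n = Finset.Ioc 0 n := Finset.Icc_add_one_left_eq_Ioc 0
    rw [hIcc, hIcc, ← Finset.sum_Ioc_consecutive f (Nat.zero_le (k ^ 6))
      (Nat.pow_le_pow_left (Nat.le_add_right k 1) 6),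
      Real.dist_eq, sub_add_cancel_left, abs_neg]
  refine cauchySeq_tendsto_of_complete (cauchySeq_of_summable_dist ?_)
  refine Summable.of_norm_bounded_eventually_nat (Real.summable_nat_pow_inv.2 one_lt_two) ?_
  filter_upwards [hω] with k hk
  rw [Real.norm_eq_abs, abs_dist, hdist]
  exact hk.le

theorem ae_exists_tendsto_sum_Icc_sub_mul_log {c D : ℝ} (hc : 0 ≤ c) (hindep : iIndepFun Z μ)
    (hL2 : ∀ j, 1 ≤ j → MemLp (Z j) 2 μ) (hnonneg : ∀ j, 1 ≤ j → 0 ≤ᵐ[μ] Z j)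
    (hvar : ∀ j, 1 ≤ j → variance (Z j) μ ≤ C / j ^ 2)
    (hmean : ∀ j, 1 ≤ j → |(∫ x, Z j x ∂μ) - c / j| ≤ D / j ^ 2) :
    ∀ᵐ ω ∂μ, ∃ L, Tendsto (fun n : ℕ => ∑ j ∈ Finset.Icc 1 n, Z j ω - c * Real.log n)
      atTop (𝓝 L) := by
  have hnonneg' : ∀ᵐ ω ∂μ, ∀ j, 1 ≤ j → 0 ≤ Z j ω := by
    rw [ae_all_iff]
    intro j
    by_cases hj : 1 ≤ j
    · filter_upwards [hnonneg j hj] with ω hω using fun _ => hω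
    · exact ae_of_all _ fun ω h => absurd h hj
  obtain ⟨Lmean, hLmean⟩ := exists_tendsto_sum_Icc_sub_mul_log hmean
  filter_upwards [ae_exists_tendsto_sum_Icc_pow_six_sub_integral hindep hL2 hvar, hnonneg']
    with ω ⟨Lcent, hLcent⟩ hω
  have hmono : Monotone fun n => ∑ j ∈ Finset.Icc 1 n, Z j ω := fun m n hmn =>
    Finset.sum_le_sum_of_subset_of_nonneg (Finset.Icc_subset_Icc_right hmn)
      fun j hj _ => hω j (Finset.mem_Icc.1 hj).1
  have hlog_mono : Monotone fun n : ℕ => c * Real.log n := fun m n hmn => by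
    rcases m.eq_zero_or_pos with rfl | hm
    · simpa using mul_nonneg hc (Real.log_natCast_nonneg n)
    · exact mul_le_mul_of_nonneg_left (Real.log_le_log (by positivity) (by exact_mod_cast hmn)) hc
  have hlog_incr : Tendsto (fun k : ℕ => c * Real.log ((k + 1) ^ 6 : ℕ) - c * Real.log (k ^ 6 : ℕ))
      atTop (𝓝 0) := by
    convert Real.tendsto_log_nat_add_one_sub_log.const_mul (c * 6) using 2 with k
    · push_cast
      rw [Real.log_pow, Real.log_pow]
      ring
    · simp
  have hsub : Tendsto (fun k : ℕ => ∑ j ∈ Finset.Icc 1 (k ^ 6), Z j ω - c * Real.log (k ^ 6 : ℕ))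
      atTop (𝓝 (Lcent + Lmean)) :=
    (hLcent.add (hLmean.comp (tendsto_pow_atTop (n := 6) (by norm_num)))).congr fun k => by
      simp only [Function.comp, Finset.sum_sub_distrib]
      ring
  exact ⟨Lcent + Lmean, tendsto_sub_of_tendsto_comp_of_monotone hmono hlog_mono
    (Nat.pow_left_strictMono (by norm_num)) (by norm_num) hlog_incr hsub⟩

end IndependentSums

theorem min_mul_le_one_sub_add_add_mul {α θ j : ℝ} (hj : 1 ≤ j) :
    min α (θ + 1) * j ≤ 1 - α + (θ + j * α) := by
  rcases le_total α (θ + 1) with h | h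
  · rw [min_eq_left h]; linarith
  · rw [min_eq_right h]; nlinarith

namespace IsStickBreaking

variable {Ω : Type*} [MeasureSpace Ω] {α θ : ℝ} {Y : ℕ → Ω → ℝ}

theorem ae_mem_Ioo (hY : IsStickBreaking α θ Y) {j : ℕ} (hj : 1 ≤ j) :
    ∀ᵐ ω, Y j ω ∈ Set.Ioo 0 1 :=
  ae_mem_Ioo_of_map_eq_betaMeasure (hY.1 j) (hY.2.2 j hj)

theorem integral_rpow (hY : IsStickBreaking α θ Y) (hα₀ : 0 ≤ α) (hα₁ : α < 1) (hθ : -α < θ)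
    {j : ℕ} (hj : 1 ≤ j) {s : ℝ} (hs : 0 ≤ s) :
    ∫ ω, Y j ω ^ s = Real.Gamma (1 - α + s) * Real.Gamma (1 - α + (θ + j * α))
      / (Real.Gamma (1 - α) * Real.Gamma (1 - α + (θ + j * α) + s)) := by
  have hjα : α ≤ j * α := le_mul_of_one_le_left hα₀ (by exact_mod_cast hj)
  exact integral_rpow_of_map_eq_betaMeasure (hY.1 j) (hY.2.2 j hj) (by linarith) (by linarith) hs

theorem iIndepFun_rpow_mul (hY : IsStickBreaking α θ Y) :
    iIndepFun (fun j ω => Y j ω ^ α * (j : ℝ) ^ (α - 1)) ℙ :=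
  hY.2.1.comp (fun j y => y ^ α * (j : ℝ) ^ (α - 1)) fun _ => by fun_prop

theorem ae_mem_Icc_rpow_mul (hY : IsStickBreaking α θ Y) (hα₀ : 0 ≤ α) (hα₁ : α ≤ 1) {j : ℕ}
    (hj : 1 ≤ j) : ∀ᵐ ω, Y j ω ^ α * (j : ℝ) ^ (α - 1) ∈ Set.Icc 0 1 := by
  have hj' : (1 : ℝ) ≤ j := by exact_mod_cast hj
  filter_upwards [hY.ae_mem_Ioo hj] with ω ⟨hY₀, hY₁⟩
  exact ⟨by positivity, mul_le_one₀ (Real.rpow_le_one hY₀.le hY₁.le hα₀) (by positivity)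
    (Real.rpow_le_one_of_one_le_of_nonpos hj' (by linarith))⟩

theorem exists_abs_integral_rpow_mul_sub_le (hY : IsStickBreaking α θ Y)
    (hα : α ∈ Set.Ioo 0 1) (hθ : -α < θ) : ∃ D, ∀ j : ℕ, 1 ≤ j →
      |(∫ ω, Y j ω ^ α * (j : ℝ) ^ (α - 1)) - α ^ (-α) * (Real.Gamma (1 - α))⁻¹ / j|
        ≤ D / j ^ 2 := by
  obtain ⟨hα₀, hα₁⟩ := hα
  set κ := min α (θ + 1)
  have hκ : 0 < κ := lt_min hα₀ (by linarith)
  refine ⟨(α + |1 - α + θ|) * κ ^ (-α) / (Real.Gamma (1 - α) * κ), fun j hj₁ => ?_⟩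
  have hj : (1 : ℝ) ≤ j := by exact_mod_cast hj₁
  have hj₀ : (0 : ℝ) < j := by linarith
  set x := 1 - α + (θ + j * α)
  have hmean : ∫ ω, Y j ω ^ α * (j : ℝ) ^ (α - 1)
      = (j : ℝ) ^ (α - 1) / Real.Gamma (1 - α) * (Real.Gamma x / Real.Gamma (x + α)) := by
    rw [integral_mul_const, hY.integral_rpow hα₀.le hα₁ hθ hj₁ hα₀.le, sub_add_cancel,
      Real.Gamma_one]
    ring
  -- the mean with the Gamma ratio replaced by its asymptotic value `(α j) ^ (-α)`
  have hlimit : α ^ (-α) * (Real.Gamma (1 - α))⁻¹ / j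
      = (j : ℝ) ^ (α - 1) / Real.Gamma (1 - α) * (α * j) ^ (-α) := by
    rw [div_mul_eq_mul_div, Real.rpow_sub_one_mul_mul_rpow_neg hα₀.le hj₀]
    ring
  have hratio := Real.abs_Gamma_div_Gamma_add_sub_rpow_neg_le (x := x) (y := κ * j) (z := α * j)
    (by positivity) (min_mul_le_one_sub_add_add_mul hj)
    (mul_le_mul_of_nonneg_right (min_le_left _ _) hj₀.le) hα₀.le hα₁.le
  rw [show x - α * j = 1 - α + θ by ring] at hratio
  rw [hmean, hlimit, ← mul_sub, abs_mul, abs_of_pos (by positivity)]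
  calc (j : ℝ) ^ (α - 1) / Real.Gamma (1 - α)
        * |Real.Gamma x / Real.Gamma (x + α) - (α * j) ^ (-α)|
      ≤ (j : ℝ) ^ (α - 1) / Real.Gamma (1 - α)
        * ((α + |1 - α + θ|) * ((κ * j) ^ (-α) / (κ * j))) := by
        gcongr
    _ = (α + |1 - α + θ|) / (Real.Gamma (1 - α) * κ * j)
        * ((j : ℝ) ^ (α - 1) * (κ * j) ^ (-α)) := by
        field_simp
    _ = _ := by
        rw [Real.rpow_sub_one_mul_mul_rpow_neg hκ.le hj₀]
        field_simp

variable [IsProbabilityMeasure (ℙ : Measure Ω)]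

theorem memLp_rpow_mul (hY : IsStickBreaking α θ Y) (hα₀ : 0 ≤ α) (hα₁ : α ≤ 1) {j : ℕ}
    (hj : 1 ≤ j) (p : ℝ≥0∞) : MemLp (fun ω => Y j ω ^ α * (j : ℝ) ^ (α - 1)) p ℙ :=
  MemLp.of_bound ((hY.1 j).pow_const α |>.mul_const _).aestronglyMeasurable 1 <|
    (hY.ae_mem_Icc_rpow_mul hα₀ hα₁ hj).mono fun _ h => by
      rw [Real.norm_eq_abs, abs_le]; exact ⟨by linarith [h.1], h.2⟩

theorem exists_variance_rpow_mul_le (hY : IsStickBreaking α θ Y) (hα : α ∈ Set.Ioo 0 1)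
    (hθ : -α < θ) : ∃ C, ∀ j : ℕ, 1 ≤ j →
      variance (fun ω => Y j ω ^ α * (j : ℝ) ^ (α - 1)) ℙ ≤ C / j ^ 2 := by
  obtain ⟨hα₀, hα₁⟩ := hα
  set κ := min α (θ + 1)
  have hκ : 0 < κ := lt_min hα₀ (by linarith)
  refine ⟨Real.Gamma (1 + α) / Real.Gamma (1 - α) * ((1 + α / κ) * κ ^ (-α)) ^ 2,
    fun j hj₁ => ?_⟩
  have hj : (1 : ℝ) ≤ j := by exact_mod_cast hj₁
  set x := 1 - α + (θ + j * α)
  have hκx : κ * j ≤ x := min_mul_le_one_sub_add_add_mul hj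
  have hsecond : ∫ ω, (Y j ω ^ α * (j : ℝ) ^ (α - 1)) ^ 2
      = ((j : ℝ) ^ (α - 1)) ^ 2 * (Real.Gamma (1 + α) / Real.Gamma (1 - α))
        * (Real.Gamma x / Real.Gamma (x + α + α)) := by
    have hsq : ∀ᵐ ω, (Y j ω ^ α * (j : ℝ) ^ (α - 1)) ^ 2
        = Y j ω ^ (2 * α) * ((j : ℝ) ^ (α - 1)) ^ 2 := by
      filter_upwards [hY.ae_mem_Ioo hj₁] with ω hω
      rw [mul_pow, ← Real.rpow_mul_natCast hω.1.le, Nat.cast_ofNat, mul_comm α]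
    rw [integral_congr_ae hsq, integral_mul_const,
      hY.integral_rpow hα₀.le hα₁ hθ hj₁ (by positivity : 0 ≤ 2 * α),
      show 1 - α + 2 * α = 1 + α by ring, show x + 2 * α = x + α + α by ring]
    ring
  have hratio : Real.Gamma x / Real.Gamma (x + α + α) ≤ ((1 + α / κ) * (κ * j) ^ (-α)) ^ 2 := by
    refine (Real.Gamma_div_Gamma_add_add_le_of_le (by positivity) hκx hα₀.le hα₁.le).trans ?_
    gcongr
    exact le_mul_of_one_le_right hκ.le hj
  calc variance (fun ω => Y j ω ^ α * (j : ℝ) ^ (α - 1)) ℙ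
      ≤ ∫ ω, (Y j ω ^ α * (j : ℝ) ^ (α - 1)) ^ 2 :=
        variance_le_expectation_sq ((hY.1 j).pow_const α |>.mul_const _).aestronglyMeasurable
    _ ≤ ((j : ℝ) ^ (α - 1)) ^ 2 * (Real.Gamma (1 + α) / Real.Gamma (1 - α))
          * ((1 + α / κ) * (κ * j) ^ (-α)) ^ 2 := by
        rw [hsecond]; gcongr
    _ = Real.Gamma (1 + α) / Real.Gamma (1 - α)
          * ((1 + α / κ) * ((j : ℝ) ^ (α - 1) * (κ * j) ^ (-α))) ^ 2 := by ring
    _ = _ := by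
        rw [Real.rpow_sub_one_mul_mul_rpow_neg hκ.le (by positivity)]
        field_simp

end IsStickBreaking

/-- `S_n - Ψ_α log n` converges almost surely, where
`Ψ_α = α^{-α} Γ(1-α)^{-1}`. -/
theorem stmt7 {Ω : Type*} [MeasureSpace Ω] [IsProbabilityMeasure (ℙ : Measure Ω)]
    (α θ : ℝ) (hα : α ∈ Set.Ioo (0:ℝ) 1) (hθ : -α < θ)
    (Y : ℕ → Ω → ℝ) (hY : IsStickBreaking α θ Y) :
    ∃ Sinf : Ω → ℝ, ∀ᵐ ω ∂ℙ,
      Tendsto (fun n : ℕ => Ssum α Y n ω - α ^ (-α) * (Real.Gamma (1 - α))⁻¹ * Real.log n)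
        atTop (𝓝 (Sinf ω)) := by
  obtain ⟨C, hvar⟩ := hY.exists_variance_rpow_mul_le hα hθ
  obtain ⟨D, hmean⟩ := hY.exists_abs_integral_rpow_mul_sub_le hα hθ
  have hΨ : 0 ≤ α ^ (-α) * (Real.Gamma (1 - α))⁻¹ := mul_nonneg (Real.rpow_nonneg hα.1.le _)
    (inv_nonneg.2 (Real.Gamma_pos_of_pos (sub_pos.2 hα.2)).le)
  have hconv := ae_exists_tendsto_sum_Icc_sub_mul_log hΨ hY.iIndepFun_rpow_mul
    (fun j hj => hY.memLp_rpow_mul hα.1.le hα.2.le hj 2)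
    (fun j hj => (hY.ae_mem_Icc_rpow_mul hα.1.le hα.2.le hj).mono fun _ h => h.1) hvar hmean
  exact ⟨fun ω => limUnder atTop fun n : ℕ =>
      Ssum α Y n ω - α ^ (-α) * (Real.Gamma (1 - α))⁻¹ * Real.log n,
    hconv.mono fun ω hω => tendsto_nhds_limUnder hω⟩
end
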